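/- arXiv:math/0407467 — 3 statements merged into one kernel-verified Lean document; each statement's English description precedes it below -/
import Mathlib

section
/- (Witt's theorem, matrix form) Given two n×m complex matrices T₁ and T₂, there exists an orthogonal matrix g ∈ O_n(ℂ) with g T₁ = T₂ if and only if T₁ᵗ T₁ = T₂ᵗ T₂ and ker T₁ = ker T₂. -/
/-!
An orthogonal `g` with `g T₁ = T₂` is an isometry of `(ℂⁿ, ⬝ᵥ)` extending `T₁ x ↦ T₂ x`, so this is
Witt's extension theorem. On a complement of the common kernel, in a basis bringing the form
`(x, y) ↦ T₁ x ⬝ᵥ T₁ y` to the normal form `diag(1, 0)`, the two maps become injective frames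
`A`, `B` with the same Gram matrix `diag(1, 0)`. Adjoining to each frame isotropic dual partners of
its radical columns makes the Gram matrix invertible, and then adjoining an orthonormal basis of
the orthogonal complement (nondegenerate forms over an algebraically closed field have one) gives
two frames `M₁`, `M₂` spanning `ℂⁿ` with the same invertible Gram matrix `Γ`; now
`g = M₂ Γ⁻¹ M₁ᵀ` works.
-/

open Matrix

variable {K : Type*} [Field K]

namespace LinearMap.BilinForm
variable {V : Type*} [AddCommGroup V] [Module K V] [FiniteDimensional K V]

theorem exists_basis_toMatrix_eq_fromBlocks [IsAlgClosed K] [Invertible (2 : K)]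
    {B : LinearMap.BilinForm K V} (hB : B.IsSymm) :
    ∃ (r s : ℕ) (v : Module.Basis (Fin r ⊕ Fin s) K V), toMatrix v B = fromBlocks 1 0 0 0 := by
  obtain ⟨v, hv⟩ := exists_orthogonal_basis (isSymm_iff.mp hB)
  choose z hz using fun i => IsAlgClosed.exists_eq_mul_self (B (v i) (v i))
  classical
  -- rescaling `v i` by `(z i)⁻¹` normalises every non-isotropic basis vector
  let c : Fin _ → Kˣ := fun i => if h : z i = 0 then 1 else (Units.mk0 (z i) h)⁻¹
  have hdiag : toMatrix (v.unitsSMul c) B = diagonal fun i => if z i = 0 then 0 else 1 := by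
    ext i j
    rw [toMatrix_apply, Module.Basis.unitsSMul_apply, Module.Basis.unitsSMul_apply, Units.smul_def,
      Units.smul_def, map_smul₂, map_smul, smul_eq_mul, smul_eq_mul, diagonal_apply]
    obtain rfl | hij := eq_or_ne i j
    · by_cases h : z i = 0 <;> simp [c, h, hz]
    · simp [hij, hv hij]
  let e : Fin _ ⊕ Fin _ ≃ Fin (Module.finrank K V) :=
    ((Fintype.equivFin _).symm.sumCongr (Fintype.equivFin _).symm).trans
      (Equiv.sumCompl fun i => z i ≠ 0)
  refine ⟨_, _, (v.unitsSMul c).reindex e.symm, ?_⟩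
  calc toMatrix ((v.unitsSMul c).reindex e.symm) B
      = (toMatrix (v.unitsSMul c) B).submatrix e e := by ext; simp [toMatrix_apply]
    _ = diagonal ((1 : Fin _ → K) ⊕ᵥ 0) := by
      rw [hdiag, submatrix_diagonal_equiv]
      congr 1
      ext (a | a) <;> simp [e, ((Fintype.equivFin _).symm a).2]
    _ = fromBlocks 1 0 0 0 := by
      rw [← fromBlocks_diagonal, Pi.one_def, diagonal_one, Pi.zero_def, diagonal_zero]

end LinearMap.BilinForm

namespace Matrix

variable {l m n ι κ ι₁ ι₂ V : Type*}

theorem injective_mulVec_of_isUnit_mul [Fintype m] [Fintype ι] [DecidableEq ι]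
    {A : Matrix m ι K} {B : Matrix ι m K} (h : IsUnit (B * A)) : Function.Injective A.mulVec := by
  refine .of_comp (f := B.mulVec) ?_
  simpa only [Function.comp_def, mulVec_mulVec] using mulVec_injective_iff_isUnit.mpr h

theorem exists_transpose_mul_eq_of_injective [Fintype m] [DecidableEq m] [Fintype ι] [DecidableEq ι]
    {A : Matrix m ι K} (hA : Function.Injective A.mulVec) (N : Matrix ι κ K) :
    ∃ D : Matrix m κ K, Aᵀ * D = N := by
  obtain ⟨L, hL⟩ := A.mulVecLin.exists_leftInverse_of_injective (LinearMap.ker_eq_bot.mpr hA)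
  have hLA : LinearMap.toMatrix' L * A = 1 := by
    rw [← LinearMap.toMatrix'_toLin' A, ← LinearMap.toMatrix'_comp, toLin'_apply', hL,
      LinearMap.toMatrix'_id]
  refine ⟨(LinearMap.toMatrix' L)ᵀ * N, ?_⟩
  rw [← Matrix.mul_assoc, ← transpose_mul, hLA, transpose_one, Matrix.one_mul]

theorem surjective_mulVec_of_injective [Fintype m] [Fintype ι] {A : Matrix m ι K}
    (hcard : Fintype.card ι = Fintype.card m) (hA : Function.Injective A.mulVec) :
    Function.Surjective A.mulVec :=
  (LinearMap.injective_iff_surjective_of_finrank_eq_finrank (f := A.mulVecLin)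
    (by simp [hcard])).mp hA

theorem eq_of_mul_eq_mul_of_surjective [Fintype m] [DecidableEq m] [Fintype κ] [DecidableEq κ]
    {X Y : Matrix l m K} {M : Matrix m κ K} (hM : Function.Surjective M.mulVec)
    (h : X * M = Y * M) : X = Y := by
  apply toLin'.injective
  rw [toLin'_apply', toLin'_apply', ← LinearMap.cancel_right (g := M.mulVecLin) hM,
    ← mulVecLin_mul, ← mulVecLin_mul, h]

theorem eq_of_mul_eq_mul_of_sup_ker_eq_top [Fintype m] [DecidableEq m] [Fintype κ]
    {X Y : Matrix l m K} {W : Matrix m κ K} {U : Submodule K (m → K)}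
    (hspan : LinearMap.range W.mulVecLin ⊔ U = ⊤) (hX : U ≤ LinearMap.ker X.mulVecLin)
    (hY : U ≤ LinearMap.ker Y.mulVecLin) (h : X * W = Y * W) : X = Y := by
  have hle : LinearMap.range W.mulVecLin ⊔ U ≤ LinearMap.ker (X - Y).mulVecLin := by
    refine sup_le ?_ fun x hx => ?_
    · rintro _ ⟨y, rfl⟩
      change (X - Y) *ᵥ (W *ᵥ y) = 0
      rw [mulVec_mulVec, Matrix.sub_mul, h, sub_self, zero_mulVec]
    · change (X - Y) *ᵥ x = 0
      rw [sub_mulVec, show X *ᵥ x = 0 from hX hx, show Y *ᵥ x = 0 from hY hx, sub_self]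
  rw [hspan, top_le_iff, LinearMap.ker_eq_top, ← toLin'_apply'] at hle
  exact sub_eq_zero.mp (toLin'.injective (hle.trans (map_zero _).symm))

theorem transpose_fromCols_mul_fromCols [Fintype m] (A : Matrix m ι K) (D : Matrix m κ K) :
    (fromCols A D)ᵀ * fromCols A D = fromBlocks (Aᵀ * A) (Aᵀ * D) (Aᵀ * D)ᵀ (Dᵀ * D) := by
  rw [transpose_fromCols, fromRows_mul_fromCols, transpose_mul, transpose_transpose]

theorem exists_orthogonal_mul_eq_of_surjective [Fintype m] [DecidableEq m] [Fintype κ]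
    [DecidableEq κ] {M₁ M₂ : Matrix m κ K} (hgram : M₁ᵀ * M₁ = M₂ᵀ * M₂)
    (hunit : IsUnit (M₁ᵀ * M₁)) (hsurj : Function.Surjective M₁.mulVec) :
    ∃ g : Matrix m m K, gᵀ * g = 1 ∧ g * M₁ = M₂ := by
  set Γ := M₁ᵀ * M₁ with hΓ
  have hdet : IsUnit Γ.det := (isUnit_iff_isUnit_det Γ).mp hunit
  have hsymm : Γ⁻¹ᵀ = Γ⁻¹ := by
    rw [transpose_nonsing_inv, hΓ, transpose_mul, transpose_transpose]
  -- `M₁ Γ⁻¹ M₁ᵀ` fixes the columns of `M₁`, which span everything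
  have hproj : M₁ * Γ⁻¹ * M₁ᵀ = 1 := by
    refine eq_of_mul_eq_mul_of_surjective hsurj ?_
    rw [Matrix.mul_assoc, ← hΓ, Matrix.mul_assoc, nonsing_inv_mul _ hdet, Matrix.mul_one,
      Matrix.one_mul]
  refine ⟨M₂ * Γ⁻¹ * M₁ᵀ, ?_, ?_⟩
  · calc (M₂ * Γ⁻¹ * M₁ᵀ)ᵀ * (M₂ * Γ⁻¹ * M₁ᵀ) = M₁ * Γ⁻¹ * (M₂ᵀ * M₂) * Γ⁻¹ * M₁ᵀ := by
          simp only [transpose_mul, transpose_transpose, hsymm, Matrix.mul_assoc]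
      _ = 1 := by rw [← hgram, Matrix.mul_assoc M₁, nonsing_inv_mul _ hdet, Matrix.mul_one, hproj]
  · rw [Matrix.mul_assoc, ← hΓ, Matrix.mul_assoc, nonsing_inv_mul _ hdet, Matrix.mul_one]

theorem isSymm_dotProductBilin_compl₁₂ [Fintype m] [AddCommGroup V] [Module K V]
    (f : V →ₗ[K] m → K) : LinearMap.BilinForm.IsSymm ((dotProductBilin K K).compl₁₂ f f) :=
  ⟨fun _ _ => dotProduct_comm _ _⟩

theorem transpose_toMatrix'_mul_toMatrix'_eq_toMatrix [Fintype m] [Fintype κ] [DecidableEq κ]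
    [AddCommGroup V] [Module K V] (f : V →ₗ[K] m → K) (v : Module.Basis κ K V) :
    (LinearMap.toMatrix' (f ∘ₗ v.equivFun.symm.toLinearMap))ᵀ *
        LinearMap.toMatrix' (f ∘ₗ v.equivFun.symm.toLinearMap) =
      LinearMap.BilinForm.toMatrix v ((dotProductBilin K K).compl₁₂ f f) := by
  ext a b
  rw [mul_apply', LinearMap.BilinForm.toMatrix_apply]
  simp [LinearMap.toMatrix'_apply, dotProduct]

theorem exists_isotropic_transpose_mul_eq [Invertible (2 : K)] [Fintype m] [DecidableEq m]
    [Fintype ι] [DecidableEq ι] [Fintype κ] [DecidableEq κ] {A : Matrix m ι K}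
    (hA : Function.Injective A.mulVec) {N : Matrix ι κ K} (hAN : Aᵀ * A * N = 0)
    (hN : Nᵀ * N = 1) : ∃ D : Matrix m κ K, Aᵀ * D = N ∧ Dᵀ * D = 0 := by
  obtain ⟨D', hD'⟩ := exists_transpose_mul_eq_of_injective hA N
  set S := D'ᵀ * D' with hS
  have hSt : Sᵀ = S := by rw [hS, transpose_mul, transpose_transpose]
  have hD'A (X : Matrix ι κ K) : D'ᵀ * (A * X) = Nᵀ * X := by
    rw [← Matrix.mul_assoc, ← hD', transpose_mul, transpose_transpose]
  have hNN (X : Matrix κ κ K) : Nᵀ * (N * X) = X := by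
    rw [← Matrix.mul_assoc, hN, Matrix.one_mul]
  have hAAN (X : Matrix κ κ K) : Aᵀ * (A * (N * X)) = 0 := by
    rw [← Matrix.mul_assoc, ← Matrix.mul_assoc, hAN, Matrix.zero_mul]
  -- correcting `D'` by a multiple of `A N`, which `Aᵀ` annihilates, makes it isotropic
  refine ⟨D' - ⅟(2 : K) • (A * (N * S)), ?_, ?_⟩
  · rw [Matrix.mul_sub, Matrix.mul_smul, hAAN, smul_zero, sub_zero, hD']
  · simp only [transpose_sub, transpose_smul, transpose_mul, hSt, Matrix.sub_mul, Matrix.mul_sub,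
      Matrix.smul_mul, Matrix.mul_smul, Matrix.mul_assoc, hD'A, hNN, hD', hN, hAAN, ← hS,
      Matrix.mul_one, Matrix.mul_zero, smul_zero, sub_zero]
    rw [sub_sub, ← add_smul, invOf_two_add_invOf_two, one_smul, sub_self]

variable [IsAlgClosed K] [Invertible (2 : K)]

theorem exists_orthonormal_complement [Fintype m] [DecidableEq m] [Fintype ι] [DecidableEq ι]
    [Fintype κ] [DecidableEq κ] {A : Matrix m ι K} (hA : IsUnit (Aᵀ * A))
    (hcard : Fintype.card ι + Fintype.card κ = Fintype.card m) :
    ∃ E : Matrix m κ K, Aᵀ * E = 0 ∧ Eᵀ * E = 1 := by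
  set W := LinearMap.ker Aᵀ.mulVecLin
  set Ψ := (dotProductBilin K K).compl₁₂ W.subtype W.subtype
  have hdet : IsUnit (Aᵀ * A).det := (isUnit_iff_isUnit_det _).mp hA
  -- `A (AᵀA)⁻¹ Aᵀ` is the projection onto the range of `A` along `W`
  have hsplit (x : m → K) : x - A *ᵥ ((Aᵀ * A)⁻¹ *ᵥ (Aᵀ *ᵥ x)) ∈ W := by
    change Aᵀ *ᵥ _ = 0
    simp only [mulVec_sub, mulVec_mulVec, ← Matrix.mul_assoc, mul_nonsing_inv _ hdet,
      Matrix.one_mul, sub_self]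
  have hrad (w : W) (hw : ∀ w' : W, Ψ w w' = 0) : w = 0 := by
    have hwA : (w : m → K) ᵥ* A = 0 := by rw [← mulVec_transpose]; exact w.2
    ext1
    refine dotProduct_eq_zero_iff.mp fun x => ?_
    have h := hw ⟨_, hsplit x⟩
    change (w : m → K) ⬝ᵥ (x - A *ᵥ _) = 0 at h
    rwa [dotProduct_sub, dotProduct_mulVec, hwA, zero_dotProduct, sub_zero] at h
  obtain ⟨r, s, v, hv⟩ := LinearMap.BilinForm.exists_basis_toMatrix_eq_fromBlocks
    (isSymm_dotProductBilin_compl₁₂ W.subtype)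
  have : IsEmpty (Fin s) := by
    refine ⟨fun j => v.ne_zero (.inr j) (hrad _ fun w' => ?_)⟩
    have h0 : Ψ (v (.inr j)) = 0 := v.ext fun b => by
      rw [← LinearMap.BilinForm.toMatrix_apply, hv]; rcases b with b | b <;> rfl
    rw [h0, LinearMap.zero_apply]
  have hrank : Module.finrank K W + Fintype.card ι = Fintype.card m := by
    have hsurj : LinearMap.range Aᵀ.mulVecLin = ⊤ := LinearMap.range_eq_top.mpr fun y =>
      ⟨A *ᵥ ((Aᵀ * A)⁻¹ *ᵥ y), by simp only [mulVecLin_apply, mulVec_mulVec, ← Matrix.mul_assoc,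
        mul_nonsing_inv _ hdet, one_mulVec]⟩
    have h := LinearMap.finrank_range_add_finrank_ker Aᵀ.mulVecLin
    rw [hsurj, finrank_top] at h
    simpa [add_comm] using h
  have e : κ ≃ Fin r ⊕ Fin s := Fintype.equivOfCardEq <| by
    rw [← Module.finrank_eq_card_basis v]; omega
  refine ⟨LinearMap.toMatrix' (W.subtype ∘ₗ (v.reindex e.symm).equivFun.symm.toLinearMap), ?_, ?_⟩
  · rw [← LinearMap.toMatrix'_toLin' Aᵀ, ← LinearMap.toMatrix'_comp, ← LinearMap.comp_assoc,
      toLin'_apply', LinearMap.comp_ker_subtype, LinearMap.zero_comp, map_zero]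
  · rw [transpose_toMatrix'_mul_toMatrix'_eq_toMatrix]
    calc LinearMap.BilinForm.toMatrix (v.reindex e.symm) Ψ
        = (fromBlocks 1 0 0 0 : Matrix (Fin r ⊕ Fin s) (Fin r ⊕ Fin s) K).submatrix e e := by
          rw [← hv]; ext
          simp only [LinearMap.BilinForm.toMatrix_apply, Module.Basis.reindex_apply,
            Equiv.symm_symm, submatrix_apply]; rfl
      _ = (1 : Matrix (Fin r ⊕ Fin s) (Fin r ⊕ Fin s) K).submatrix e e := by
          rw [← fromBlocks_one, Subsingleton.elim (0 : Matrix (Fin s) (Fin s) K) 1]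
      _ = 1 := submatrix_one_equiv e

theorem exists_orthogonal_mul_eq_of_isUnit [Fintype m] [DecidableEq m] [Fintype ι] [DecidableEq ι]
    {A B : Matrix m ι K} (hgram : Aᵀ * A = Bᵀ * B) (hunit : IsUnit (Aᵀ * A)) :
    ∃ g : Matrix m m K, gᵀ * g = 1 ∧ g * A = B := by
  have hle : Fintype.card ι ≤ Fintype.card m := by
    simpa using LinearMap.finrank_le_finrank_of_injective (f := A.mulVecLin)
      (injective_mulVec_of_isUnit_mul hunit)
  have hcard : Fintype.card ι + Fintype.card (Fin (Fintype.card m - Fintype.card ι)) =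
      Fintype.card m := by simp only [Fintype.card_fin]; omega
  obtain ⟨E₁, hAE, hE₁⟩ := exists_orthonormal_complement hunit hcard
  obtain ⟨E₂, hBE, hE₂⟩ := exists_orthonormal_complement (hgram ▸ hunit) hcard
  have hM₁ : (fromCols A E₁)ᵀ * fromCols A E₁ = fromBlocks (Aᵀ * A) 0 0 1 := by
    rw [transpose_fromCols_mul_fromCols, hAE, hE₁, transpose_zero]
  have hM₂ : (fromCols B E₂)ᵀ * fromCols B E₂ = fromBlocks (Aᵀ * A) 0 0 1 := by
    rw [transpose_fromCols_mul_fromCols, hBE, hE₂, transpose_zero, hgram]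
  have hunitM : IsUnit ((fromCols A E₁)ᵀ * fromCols A E₁) := by
    rwa [hM₁, isUnit_iff_isUnit_det, det_fromBlocks_zero₂₁, det_one, mul_one,
      ← isUnit_iff_isUnit_det]
  obtain ⟨g, hg, hgM⟩ := exists_orthogonal_mul_eq_of_surjective (hM₁.trans hM₂.symm) hunitM
    (surjective_mulVec_of_injective (by simp only [Fintype.card_sum]; omega)
      (injective_mulVec_of_isUnit_mul hunitM))
  rw [mul_fromCols, fromCols_ext_iff] at hgM
  exact ⟨g, hg, hgM.1⟩

theorem exists_orthogonal_mul_eq_of_gram_eq_fromBlocks [Fintype m] [DecidableEq m] [Fintype ι₁]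
    [DecidableEq ι₁] [Fintype ι₂] [DecidableEq ι₂] {A B : Matrix m (ι₁ ⊕ ι₂) K}
    (hA : Function.Injective A.mulVec) (hB : Function.Injective B.mulVec)
    (hAA : Aᵀ * A = fromBlocks 1 0 0 0) (hBB : Bᵀ * B = fromBlocks 1 0 0 0) :
    ∃ g : Matrix m m K, gᵀ * g = 1 ∧ g * A = B := by
  set G : Matrix (ι₁ ⊕ ι₂) (ι₁ ⊕ ι₂) K := fromBlocks 1 0 0 0
  set N : Matrix (ι₁ ⊕ ι₂) ι₂ K := fromRows 0 1
  have hGN : G * N = 0 := by simp [G, N, fromBlocks_mul_fromRows]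
  have hN : Nᵀ * N = 1 := by simp [N, transpose_fromRows, fromCols_mul_fromRows]
  obtain ⟨D₁, hAD, hD₁⟩ := exists_isotropic_transpose_mul_eq hA (by rw [hAA, hGN]) hN
  obtain ⟨D₂, hBD, hD₂⟩ := exists_isotropic_transpose_mul_eq hB (by rw [hBB, hGN]) hN
  -- each radical column spans a hyperbolic plane with its partner, so the Gram matrix `H` of
  -- `[A | D]` is invertible and the same for both frames
  set H := fromBlocks G N Nᵀ 0
  have hH : IsUnit H := by
    refine (isUnit_iff_isUnit_det H).mpr (isUnit_det_of_left_inverse (B := H) ?_)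
    have hNG : Nᵀ * G = 0 := by simp [G, N, transpose_fromRows, fromCols_mul_fromBlocks]
    rw [fromBlocks_multiply, hGN, hNG, hN]
    simp only [G, N, transpose_fromRows, fromRows_mul_fromCols, fromBlocks_multiply]
    simp [fromBlocks_add, fromBlocks_one]
  have hM₁ : (fromCols A D₁)ᵀ * fromCols A D₁ = H := by
    rw [transpose_fromCols_mul_fromCols, hAA, hAD, hD₁]
  have hM₂ : (fromCols B D₂)ᵀ * fromCols B D₂ = H := by
    rw [transpose_fromCols_mul_fromCols, hBB, hBD, hD₂]
  obtain ⟨g, hg, hgM⟩ := exists_orthogonal_mul_eq_of_isUnit (hM₁.trans hM₂.symm) (hM₁ ▸ hH)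
  rw [mul_fromCols, fromCols_ext_iff] at hgM
  exact ⟨g, hg, hgM.1⟩

theorem exists_complement_ker_gram_eq_fromBlocks [Fintype n] [DecidableEq n] [Fintype m]
    [DecidableEq m] (T : Matrix n m K) :
    ∃ (r s : ℕ) (W : Matrix m (Fin r ⊕ Fin s) K), (T * W)ᵀ * (T * W) = fromBlocks 1 0 0 0 ∧
      Function.Injective (T * W).mulVec ∧
      LinearMap.range W.mulVecLin ⊔ LinearMap.ker T.mulVecLin = ⊤ := by
  obtain ⟨C, hC⟩ := (LinearMap.ker T.mulVecLin).exists_isCompl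
  obtain ⟨r, s, v, hv⟩ := LinearMap.BilinForm.exists_basis_toMatrix_eq_fromBlocks
    (isSymm_dotProductBilin_compl₁₂ (T.mulVecLin ∘ₗ C.subtype))
  set f := C.subtype ∘ₗ v.equivFun.symm.toLinearMap
  have hW : (LinearMap.toMatrix' f).mulVecLin = f := by rw [← toLin'_apply', toLin'_toMatrix']
  have hTW : T * LinearMap.toMatrix' f = LinearMap.toMatrix' (T.mulVecLin ∘ₗ f) := by
    rw [LinearMap.toMatrix'_comp, ← toLin'_apply', LinearMap.toMatrix'_toLin']
  refine ⟨r, s, LinearMap.toMatrix' f, ?_, ?_, ?_⟩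
  · rw [hTW, ← LinearMap.comp_assoc, transpose_toMatrix'_mul_toMatrix'_eq_toMatrix, hv]
  · have hf : Function.Injective f := C.injective_subtype.comp v.equivFun.symm.injective
    have hker : LinearMap.ker (T.mulVecLin ∘ₗ f) = ⊥ := by
      refine LinearMap.ker_eq_bot'.mpr fun x hx => hf ?_
      have hfx : f x ∈ LinearMap.ker T.mulVecLin ⊓ C := ⟨hx, (v.equivFun.symm x).2⟩
      rw [hC.inf_eq_bot, Submodule.mem_bot] at hfx
      rw [hfx, map_zero]
    rw [hTW, ← coe_mulVecLin, ← LinearMap.ker_eq_bot, ← toLin'_apply', toLin'_toMatrix']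
    exact hker
  · rw [hW, LinearMap.range_comp, LinearEquiv.range, Submodule.map_top, Submodule.range_subtype,
      sup_comm, hC.sup_eq_top]

end Matrix

/-- **Witt's theorem, matrix form.**  Given two `n × m` complex matrices `T₁`, `T₂`,
there is `g ∈ O_n(ℂ)` (i.e. `gᵀ g = 1`) with `g T₁ = T₂` if and only if
`T₁ᵗ T₁ = T₂ᵗ T₂` and `ker T₁ = ker T₂`. -/
theorem stmt_2 (n m : ℕ) (T₁ T₂ : Matrix (Fin n) (Fin m) ℂ) :
    (∃ g : Matrix (Fin n) (Fin n) ℂ, gᵀ * g = 1 ∧ g * T₁ = T₂) ↔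
      (T₁ᵀ * T₁ = T₂ᵀ * T₂ ∧
        LinearMap.ker T₁.mulVecLin = LinearMap.ker T₂.mulVecLin) := by
  constructor
  · rintro ⟨g, hg, rfl⟩
    have hginj : LinearMap.ker g.mulVecLin = ⊥ :=
      LinearMap.ker_eq_bot.mpr (injective_mulVec_of_isUnit_mul (B := gᵀ) (hg ▸ isUnit_one))
    refine ⟨by rw [transpose_mul, Matrix.mul_assoc, ← Matrix.mul_assoc gᵀ, hg, Matrix.one_mul], ?_⟩
    rw [mulVecLin_mul, LinearMap.ker_comp, hginj, Submodule.comap_bot]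
  · rintro ⟨hgram, hker⟩
    obtain ⟨r, s, W, hW₁, hinj₁, hspan⟩ := exists_complement_ker_gram_eq_fromBlocks T₁
    have hinj₂ : Function.Injective (T₂ * W).mulVec := by
      rw [← coe_mulVecLin, ← LinearMap.ker_eq_bot, mulVecLin_mul, LinearMap.ker_comp, ← hker,
        ← LinearMap.ker_comp, ← mulVecLin_mul, LinearMap.ker_eq_bot]
      exact hinj₁
    have hW₂ : (T₂ * W)ᵀ * (T₂ * W) = fromBlocks 1 0 0 0 := by
      rw [← hW₁, transpose_mul, transpose_mul, Matrix.mul_assoc, ← Matrix.mul_assoc T₂ᵀ, ← hgram,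
        Matrix.mul_assoc, Matrix.mul_assoc]
    obtain ⟨g, hg, hgW⟩ := exists_orthogonal_mul_eq_of_gram_eq_fromBlocks hinj₁ hinj₂ hW₁ hW₂
    have hgT₁ : LinearMap.ker T₁.mulVecLin ≤ LinearMap.ker (g * T₁).mulVecLin := by
      rw [mulVecLin_mul]
      exact LinearMap.ker_le_ker_comp _ _
    exact ⟨g, hg, eq_of_mul_eq_mul_of_sup_ker_eq_top hspan hgT₁ hker.le
      (by rw [Matrix.mul_assoc, hgW])⟩
end

section
/- Assume n ≥ 2m. For every symmetric m×m complex matrix Y of rank k, there exists an n×m matrix X of rank m with XᵗX = Y; in particular, the map Q(T) = TᵗT from M_{n,m}(ℂ) to Sym_m(ℂ) is surjective. -/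
/-!
Split a symmetric `Y` as `Y = A² + B²` with `A = (Y + 1)/2`, `B = i(Y - 1)/2`, both symmetric.
Stacking `A` over `B` gives a `2m × m` matrix `X` with `XᵀX = AᵀA + BᵀB = Y`, and `X` has full
column rank because `A + iB = 1`. Padding `X` with `n - 2m` zero rows changes neither `XᵀX` nor
the rank.
-/

open Matrix

namespace Matrix

variable {ι κ κ' R : Type*}

theorem rank_eq_card_of_mul_eq_one [Fintype ι] [Fintype κ] [DecidableEq ι] [CommSemiring R]
    [StrongRankCondition R] {L : Matrix ι κ R} {X : Matrix κ ι R} (h : L * X = 1) :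
    X.rank = Fintype.card ι :=
  X.rank_le_card_width.antisymm (by simpa [h] using rank_mul_le_right L X)

theorem transpose_fromRows_mul_fromRows [Fintype κ] [Fintype κ'] [CommSemiring R]
    (A : Matrix κ ι R) (B : Matrix κ' ι R) :
    (fromRows A B)ᵀ * fromRows A B = Aᵀ * A + Bᵀ * B := by
  rw [transpose_fromRows, fromCols_mul_fromRows]

theorem rank_fromRows_zero [Fintype ι] [Fintype κ] [Fintype κ'] [CommRing R]
    [StrongRankCondition R] (X : Matrix κ ι R) :
    (fromRows X (0 : Matrix κ' ι R)).rank = X.rank := by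
  classical
  apply le_antisymm
  · simpa [fromRows_mul] using
      rank_mul_le_right (fromRows (1 : Matrix κ κ R) (0 : Matrix κ' κ R)) X
  · simpa [fromCols_mul_fromRows] using
      rank_mul_le_right (fromCols (1 : Matrix κ κ R) (0 : Matrix κ κ' R)) (fromRows X 0)

theorem exists_fin_rank_eq_transpose_mul_self_eq [Fintype ι] [Fintype κ] [CommRing R]
    [StrongRankCondition R] (X : Matrix κ ι R) {n : ℕ} (hn : Fintype.card κ ≤ n) :
    ∃ X' : Matrix (Fin n) ι R, X'.rank = X.rank ∧ X'ᵀ * X' = Xᵀ * X := by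
  let e : κ ⊕ Fin (n - Fintype.card κ) ≃ Fin n :=
    ((Fintype.equivFin κ).sumCongr (Equiv.refl _)).trans
      (finSumFinEquiv.trans (finCongr (by omega)))
  refine ⟨(fromRows X 0).submatrix e.symm id, ?_, ?_⟩
  · exact (rank_submatrix _ e.symm (Equiv.refl ι)).trans (rank_fromRows_zero X)
  · rw [transpose_submatrix, submatrix_mul_equiv, submatrix_id_id,
      transpose_fromRows_mul_fromRows]
    simp

variable [Fintype ι] [DecidableEq ι] {K : Type*} [Field K] [NeZero (2 : K)] {i : K}

theorem exists_transpose_mul_self_add_eq_of_transpose_eq (hi : i * i = -1) {Y : Matrix ι ι K}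
    (hY : Yᵀ = Y) : ∃ A B : Matrix ι ι K, Aᵀ * A + Bᵀ * B = Y ∧ A + i • B = 1 := by
  refine ⟨(2⁻¹ : K) • (Y + 1), (i * 2⁻¹) • (Y - 1), ?_, ?_⟩
  · simp only [transpose_smul, transpose_add, transpose_sub, transpose_one, hY, smul_mul_smul,
      add_mul, mul_add, sub_mul, mul_sub, mul_one, one_mul]
    match_scalars <;> field_simp
    · linear_combination hi
    · linear_combination (-2 : K) * hi
    · linear_combination hi
  · rw [smul_smul, ← mul_assoc, hi]
    match_scalars <;> field_simp <;> ring

theorem exists_rank_eq_card_transpose_mul_self_eq_of_transpose_eq (hi : i * i = -1)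
    {Y : Matrix ι ι K} (hY : Yᵀ = Y) :
    ∃ X : Matrix (ι ⊕ ι) ι K, X.rank = Fintype.card ι ∧ Xᵀ * X = Y := by
  obtain ⟨A, B, hAB, hinv⟩ := exists_transpose_mul_self_add_eq_of_transpose_eq hi hY
  refine ⟨fromRows A B, rank_eq_card_of_mul_eq_one (L := fromCols 1 (i • 1)) ?_, ?_⟩
  · rwa [fromCols_mul_fromRows, one_mul, smul_one_mul]
  · rwa [transpose_fromRows_mul_fromRows]

end Matrix

/-- Assume `n ≥ 2m`.  Every symmetric `m × m` complex matrix `Y` admits a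
full-rank `n × m` matrix `X` with `Xᵗ X = Y`; in particular `Q(T) = Tᵗ T` is a
surjective map from `M_{n,m}(ℂ)` onto the symmetric matrices. -/
theorem stmt_3 (n m : ℕ) (hnm : n ≥ 2 * m)
    (Y : Matrix (Fin m) (Fin m) ℂ) (hY : Yᵀ = Y) :
    ∃ X : Matrix (Fin n) (Fin m) ℂ, X.rank = m ∧ Xᵀ * X = Y := by
  obtain ⟨X₀, hX₀rank, hX₀⟩ :=
    exists_rank_eq_card_transpose_mul_self_eq_of_transpose_eq Complex.I_mul_I hY
  obtain ⟨X, hXrank, hX⟩ :=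
    exists_fin_rank_eq_transpose_mul_self_eq X₀ (n := n) (by simp only [Fintype.card_sum, Fintype.card_fin]; omega)
  exact ⟨X, by simp [hXrank, hX₀rank], hX.trans hX₀⟩
end

section
/- Assume n ≥ 2m. The algebra of O_n(ℂ)-invariant polynomial functions on M_{n,m}(ℂ) is the polynomial algebra freely generated by the m(m+1)/2 quadratic invariants r_{ij}, 1 ≤ i ≤ j ≤ m; equivalently the ℂ-algebra homomorphism from the polynomial ring in m(m+1)/2 indeterminates sending the generators to the r_{ij} is an isomorphism onto ℂ[M_{n,m}]^{O_n}. -/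
/-!
For `n ≥ 2m` every symmetric `S` is the Gram matrix `YᵀY` of an `n × m` matrix `Y = gramRoot S`
depending polynomially on `S`. Hence substituting `gramRoot` of the generic symmetric matrix for
the matrix variables is a left inverse `ψ` of `φ : t_{ij} ↦ r_{ij}`. If `f` is invariant, `f` and
`φ (ψ f)` agree at every `X` with `det (XᵀX) ≠ 0`, since `X` and `gramRoot (XᵀX)` have the same
nonsingular Gram matrix and so lie in one `O_n`-orbit. As `det (r_{ij})` is a nonzero polynomial,
`f = φ (ψ f)`.
-/

open MvPolynomial Matrix Module

/-- The quadratic invariant `r_{ij}(X) = Σ_s x_{si} x_{sj}`. -/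
noncomputable def rInv (n m : ℕ) (i j : Fin m) : MvPolynomial (Fin n × Fin m) ℂ :=
  ∑ s : Fin n, X (s, i) * X (s, j)

/-- A polynomial function on `M_{n,m}(ℂ)` is `O_n`-invariant if it takes the same value
at `g • X` and `X` for every `g` with `gᵀ g = 1` (acting by left multiplication). -/
def IsOnInvariant (n m : ℕ) (f : MvPolynomial (Fin n × Fin m) ℂ) : Prop :=
  ∀ g : Matrix (Fin n) (Fin n) ℂ, gᵀ * g = 1 →
    ∀ X : Matrix (Fin n) (Fin m) ℂ,
      eval (fun p : Fin n × Fin m => (g * X) p.1 p.2) f =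
        eval (fun p : Fin n × Fin m => X p.1 p.2) f

section GramRoot

variable {A : Type*} [CommRing A] [Algebra ℂ A]

def finEquivOfTwoMulLe {n m : ℕ} (h : 2 * m ≤ n) :
    Fin n ≃ (Fin m ⊕ Fin m) ⊕ Fin (n - 2 * m) :=
  (finCongr (by omega)).trans <|
    finSumFinEquiv.symm.trans (Equiv.sumCongr finSumFinEquiv.symm (Equiv.refl _))

/-- Its Gram matrix is `(1 + S/4)ᵀ(1 + S/4) - (1 - S/4)ᵀ(1 - S/4) = (S + Sᵀ)/2`. -/
noncomputable def gramRoot {n m : ℕ} (h : 2 * m ≤ n) (S : Matrix (Fin m) (Fin m) A) :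
    Matrix (Fin n) (Fin m) A :=
  (fromRows (fromRows (1 + (4⁻¹ : ℂ) • S) (Complex.I • (1 - (4⁻¹ : ℂ) • S))) 0).submatrix
    (finEquivOfTwoMulLe h) id

theorem gramRoot_transpose_mul_self {n m : ℕ} (h : 2 * m ≤ n) {S : Matrix (Fin m) (Fin m) A}
    (hS : Sᵀ = S) : (gramRoot h S)ᵀ * gramRoot h S = S := by
  rw [gramRoot, transpose_submatrix, submatrix_mul_equiv, submatrix_id_id, transpose_fromRows,
    fromCols_mul_fromRows, transpose_fromRows, fromCols_mul_fromRows, transpose_zero,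
    Matrix.zero_mul, add_zero, transpose_smul, smul_mul_smul_comm, Complex.I_mul_I, neg_one_smul]
  simp only [transpose_add, transpose_sub, transpose_smul, transpose_one, hS]
  set T := (4⁻¹ : ℂ) • S
  calc (1 + T) * (1 + T) + -((1 - T) * (1 - T)) = (4 : ℂ) • T := by
        rw [ofNat_smul_eq_nsmul]; noncomm_ring
    _ = S := by simp [T, smul_smul]

theorem map_gramRoot {A' : Type*} [CommRing A'] [Algebra ℂ A'] {n m : ℕ} (h : 2 * m ≤ n)
    (S : Matrix (Fin m) (Fin m) A) (χ : A →ₐ[ℂ] A') :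
    (gramRoot h S).map χ = gramRoot h (S.map χ) := by
  ext s i
  simp only [gramRoot, map_apply, submatrix_apply, id_eq]
  rcases finEquivOfTwoMulLe h s with (k | k) | k <;> simp [one_apply, apply_ite χ]

end GramRoot

section Orthogonal

variable {K : Type*} [Field K]

theorem LinearMap.BilinForm.exists_basis_toMatrix_eq_one [IsAlgClosed K] [NeZero (2 : K)]
    {V : Type*} [AddCommGroup V] [Module K V] [FiniteDimensional K V]
    {B : LinearMap.BilinForm K V} (hs : B.IsSymm) (hB : B.Nondegenerate) :
    ∃ v : Basis (Fin (finrank K V)) K V, LinearMap.BilinForm.toMatrix v B = 1 := by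
  have : Invertible (2 : K) := invertibleOfNonzero two_ne_zero
  obtain ⟨w, hw⟩ := exists_orthogonal_basis (isSymm_iff.mp hs)
  have hdiag := iIsOrtho.not_isOrtho_basis_self_of_nondegenerate hw hB
  choose c hc using fun i => IsAlgClosed.exists_eq_mul_self (B (w i) (w i))
  have hc0 : ∀ i, c i ≠ 0 := fun i h0 => hdiag i (by rw [hc i, h0, mul_zero])
  refine ⟨w.isUnitSMul (w := fun i => (c i)⁻¹) fun i => (inv_ne_zero (hc0 i)).isUnit, ?_⟩
  ext i j
  rw [toMatrix_apply, Basis.isUnitSMul_apply, Basis.isUnitSMul_apply, LinearMap.map_smul₂,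
    LinearMap.map_smul, one_apply]
  split_ifs with hij
  · subst hij; rw [smul_eq_mul, smul_eq_mul, hc i]; field_simp [hc0 i]
  · rw [hw hij, smul_zero, smul_zero]

theorem Matrix.transpose_fromCols_mul_self_of_orthonormal {ι κ κ' : Type*} [Fintype ι]
    [DecidableEq κ'] {Z : Matrix ι κ K} {Z' : Matrix ι κ' K}
    (h₁ : Zᵀ * Z' = 0) (h₂ : Z'ᵀ * Z' = 1) :
    (fromCols Z Z')ᵀ * fromCols Z Z' = fromBlocks (Zᵀ * Z) 0 0 1 := by
  rw [transpose_fromCols, fromRows_mul_fromCols, h₁, h₂, ← transpose_transpose (Z'ᵀ * Z),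
    transpose_mul, transpose_transpose, h₁, transpose_zero]

variable {ι κ : Type*} [Fintype ι] [DecidableEq ι] [Fintype κ] [DecidableEq κ]

theorem Matrix.nondegenerate_restrict_dotProductBilin_ker_transpose {X : Matrix ι κ K}
    (hX : (Xᵀ * X).det ≠ 0) :
    (LinearMap.BilinForm.restrict (dotProductBilin K K)
      (LinearMap.ker Xᵀ.mulVecLin)).Nondegenerate := by
  refine LinearMap.BilinForm.nondegenerate_restrict_of_disjoint_orthogonal _
    (fun x y h => by simpa [dotProduct_comm] using h) ?_
  rw [Submodule.disjoint_def]
  intro u hu hu'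
  rw [LinearMap.mem_ker, mulVecLin_apply] at hu
  have hproj : ∀ v, v - X *ᵥ ((Xᵀ * X)⁻¹ *ᵥ (Xᵀ *ᵥ v)) ∈ LinearMap.ker Xᵀ.mulVecLin := by
    intro v
    rw [LinearMap.mem_ker, mulVecLin_apply, mulVec_sub, mulVec_mulVec, mulVec_mulVec,
      mul_nonsing_inv _ (isUnit_iff_ne_zero.2 hX), one_mulVec, sub_self]
  have horth : ∀ v, v ⬝ᵥ u = 0 := by
    intro v
    have h1 : (v - X *ᵥ ((Xᵀ * X)⁻¹ *ᵥ (Xᵀ *ᵥ v))) ⬝ᵥ u = 0 := hu' _ (hproj v)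
    rwa [sub_dotProduct, dotProduct_comm (X *ᵥ _), dotProduct_mulVec, ← mulVec_transpose, hu,
      zero_dotProduct, sub_zero] at h1
  funext i
  simpa using horth (Pi.single i 1)

variable [IsAlgClosed K] [NeZero (2 : K)]

theorem Matrix.exists_orthonormal_complement_s6 {X : Matrix ι κ K} (hX : (Xᵀ * X).det ≠ 0) :
    ∃ (k : ℕ) (X' : Matrix ι (Fin k) K),
      Fintype.card κ + k = Fintype.card ι ∧ Xᵀ * X' = 0 ∧ X'ᵀ * X' = 1 := by
  set U := LinearMap.ker Xᵀ.mulVecLin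
  have hsurj : Function.Surjective Xᵀ.mulVecLin := fun t =>
    ⟨X *ᵥ ((Xᵀ * X)⁻¹ *ᵥ t), by
      rw [mulVecLin_apply, mulVec_mulVec, mulVec_mulVec,
        mul_nonsing_inv _ (isUnit_iff_ne_zero.2 hX), one_mulVec]⟩
  have hrank := LinearMap.finrank_range_add_finrank_ker Xᵀ.mulVecLin
  rw [LinearMap.range_eq_top.2 hsurj, finrank_top, finrank_fintype_fun_eq_card,
    finrank_fintype_fun_eq_card] at hrank
  obtain ⟨v, hv⟩ := LinearMap.BilinForm.exists_basis_toMatrix_eq_one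
    (B := LinearMap.BilinForm.restrict (dotProductBilin K K) U)
    ⟨fun x y => dotProduct_comm _ _⟩ (nondegenerate_restrict_dotProductBilin_ker_transpose hX)
  refine ⟨finrank K U, (of fun j s => (v j : ι → K) s)ᵀ, hrank, ?_, ?_⟩
  · ext i j
    exact congrFun (v j).2 i
  · rw [← hv]
    ext i j
    rw [LinearMap.BilinForm.toMatrix_apply]
    rfl

/-- Witt-type extension: complete `X` and `Y` by orthonormal complements `X'`, `Y'` to square
matrices `P`, `Q` with the same Gram matrix; then `g = Q P⁻¹`. -/
theorem Matrix.exists_orthogonal_mul_eq {X Y : Matrix ι κ K}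
    (hXY : Yᵀ * Y = Xᵀ * X) (hX : (Xᵀ * X).det ≠ 0) :
    ∃ g : Matrix ι ι K, gᵀ * g = 1 ∧ g * X = Y := by
  obtain ⟨k, X', hk, hXX', hX'⟩ := exists_orthonormal_complement_s6 hX
  obtain ⟨k', Y', hk', hYY', hY'⟩ := exists_orthonormal_complement_s6 (hXY ▸ hX)
  obtain rfl : k' = k := by omega
  set P := fromCols X X'
  set Q := fromCols Y Y'
  have hPP : Pᵀ * P = fromBlocks (Xᵀ * X) 0 0 1 :=
    transpose_fromCols_mul_self_of_orthonormal hXX' hX'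
  have hQQ : Qᵀ * Q = Pᵀ * P := by
    rw [hPP, transpose_fromCols_mul_self_of_orthonormal hYY' hY', hXY]
  set L := (Pᵀ * P)⁻¹ * Pᵀ
  have hPP_unit : IsUnit (Pᵀ * P).det := by
    rw [hPP, det_fromBlocks_zero₂₁, det_one, mul_one]
    exact isUnit_iff_ne_zero.2 hX
  have hLP : L * P = 1 := by rw [Matrix.mul_assoc, nonsing_inv_mul _ hPP_unit]
  have hPL : P * L = 1 :=
    (mul_eq_one_comm_of_equiv (Fintype.equivOfCardEq (by simp [hk]))).mpr hLP
  refine ⟨Q * L, ?_, ?_⟩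
  · calc (Q * L)ᵀ * (Q * L) = Lᵀ * (Qᵀ * Q) * L := by
          simp only [transpose_mul, Matrix.mul_assoc]
      _ = (P * L)ᵀ * (P * L) := by
          rw [hQQ]; simp only [transpose_mul, Matrix.mul_assoc]
      _ = 1 := by rw [hPL, transpose_one, Matrix.one_mul]
  · have hQLP : Q * L * P = Q := by rw [Matrix.mul_assoc, hLP, Matrix.mul_one]
    rw [mul_fromCols] at hQLP
    exact (fromCols_inj hQLP).1

end Orthogonal

theorem MvPolynomial.eq_of_eval_eq_of_eval_ne_zero {R σ : Type*} [CommRing R] [IsDomain R]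
    [Infinite R] {p q D : MvPolynomial σ R} (hD : D ≠ 0)
    (h : ∀ x, eval x D ≠ 0 → eval x p = eval x q) : p = q := by
  have hvanish : (p - q) * D = 0 := funext fun x => by
    by_cases hx : eval x D = 0
    · simp [hx]
    · simp [h x hx]
  simpa [sub_eq_zero, hD] using hvanish

def upperEntries {R : Type*} {m : ℕ} (S : Matrix (Fin m) (Fin m) R) :
    {p : Fin m × Fin m // p.1 ≤ p.2} → R :=
  fun p => S p.1.1 p.1.2

noncomputable def genericSymm (R : Type*) [CommSemiring R] (m : ℕ) :
    Matrix (Fin m) (Fin m) (MvPolynomial {p : Fin m × Fin m // p.1 ≤ p.2} R) :=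
  of fun i j => if h : i ≤ j then X ⟨(i, j), h⟩ else X ⟨(j, i), le_of_not_ge h⟩

section GenericSymm

variable (R : Type*) [CommSemiring R] (m : ℕ)

theorem genericSymm_transpose : (genericSymm R m)ᵀ = genericSymm R m := by
  ext i j
  rcases lt_trichotomy i j with hij | rfl | hij
  · simp [genericSymm, hij.le, hij.not_ge]
  · rfl
  · simp [genericSymm, hij.le, hij.not_ge]

theorem upperEntries_genericSymm : upperEntries (genericSymm R m) = X := by
  funext p
  simp [upperEntries, genericSymm, p.2]

theorem map_genericSymm {A : Type*} [CommSemiring A] [Algebra R A]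
    {S : Matrix (Fin m) (Fin m) A} (hS : Sᵀ = S) :
    (genericSymm R m).map (aeval (upperEntries S)) = S := by
  ext i j
  by_cases hij : i ≤ j
  · simp [genericSymm, hij, upperEntries]
  · simpa [genericSymm, hij, upperEntries] using congrFun (congrFun hS i) j

end GenericSymm

section Invariants

variable {n m : ℕ}

theorem aeval_rInv {A : Type*} [CommSemiring A] [Algebra ℂ A] (Y : Matrix (Fin n) (Fin m) A)
    (i j : Fin m) :
    aeval (fun p : Fin n × Fin m => Y p.1 p.2) (rInv n m i j) = (Yᵀ * Y) i j := by
  simp [rInv, mul_apply]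

theorem aeval_comp_aeval_rInv {A : Type*} [CommSemiring A] [Algebra ℂ A]
    (Y : Matrix (Fin n) (Fin m) A) :
    (aeval fun p : Fin n × Fin m => Y p.1 p.2).comp
      (aeval fun p : {p : Fin m × Fin m // p.1 ≤ p.2} => rInv n m p.1.1 p.1.2) =
      aeval (upperEntries (Yᵀ * Y)) := by
  rw [comp_aeval]
  congr
  funext p
  exact aeval_rInv Y _ _

theorem aeval_det_rInv {A : Type*} [CommRing A] [Algebra ℂ A] (Y : Matrix (Fin n) (Fin m) A) :
    aeval (fun p : Fin n × Fin m => Y p.1 p.2) (of fun i j => rInv n m i j).det =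
      (Yᵀ * Y).det := by
  rw [AlgHom.map_det]
  congr
  ext i j
  exact aeval_rInv Y i j

theorem det_rInv_ne_zero (h : 2 * m ≤ n) : (of fun i j => rInv n m i j).det ≠ 0 := by
  intro h0
  have := aeval_det_rInv (gramRoot h (1 : Matrix (Fin m) (Fin m) ℂ))
  rw [h0, gramRoot_transpose_mul_self h transpose_one, det_one, map_zero] at this
  exact zero_ne_one this

theorem aeval_comp_aeval_gramRoot {A : Type*} [CommRing A] [Algebra ℂ A] (h : 2 * m ≤ n)
    {S : Matrix (Fin m) (Fin m) A} (hS : Sᵀ = S) :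
    (aeval (upperEntries S)).comp
      (aeval fun p : Fin n × Fin m => gramRoot h (genericSymm ℂ m) p.1 p.2) =
      aeval fun p : Fin n × Fin m => gramRoot h S p.1 p.2 := by
  rw [comp_aeval]
  congr
  funext p
  change (gramRoot h (genericSymm ℂ m)).map (aeval (upperEntries S)) p.1 p.2 = _
  rw [map_gramRoot, map_genericSymm ℂ m hS]

theorem leftInverse_aeval_rInv (h : 2 * m ≤ n) :
    Function.LeftInverse (aeval fun p : Fin n × Fin m => gramRoot h (genericSymm ℂ m) p.1 p.2)
      (aeval fun p : {p : Fin m × Fin m // p.1 ≤ p.2} => rInv n m p.1.1 p.1.2) := by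
  intro P
  rw [← AlgHom.comp_apply, aeval_comp_aeval_rInv,
    gramRoot_transpose_mul_self h (genericSymm_transpose ℂ m), upperEntries_genericSymm,
    aeval_X_left, AlgHom.id_apply]

theorem isOnInvariant_aeval_rInv (P : MvPolynomial {p : Fin m × Fin m // p.1 ≤ p.2} ℂ) :
    IsOnInvariant n m
      (aeval (fun p : {p : Fin m × Fin m // p.1 ≤ p.2} => rInv n m p.1.1 p.1.2) P) := by
  intro g hg Y
  have hgram : (g * Y)ᵀ * (g * Y) = Yᵀ * Y := by
    rw [transpose_mul, Matrix.mul_assoc, ← Matrix.mul_assoc gᵀ, hg, Matrix.one_mul]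
  rw [← aeval_eq_eval, ← aeval_eq_eval, ← AlgHom.comp_apply, aeval_comp_aeval_rInv,
    ← AlgHom.comp_apply, aeval_comp_aeval_rInv, hgram]

theorem mem_range_aeval_rInv_of_isOnInvariant (h : 2 * m ≤ n)
    {f : MvPolynomial (Fin n × Fin m) ℂ} (hf : IsOnInvariant n m f) :
    f ∈ (aeval (R := ℂ) fun p : {p : Fin m × Fin m // p.1 ≤ p.2} =>
      rInv n m p.1.1 p.1.2).range := by
  rw [AlgHom.mem_range]
  refine ⟨aeval (fun p : Fin n × Fin m => gramRoot h (genericSymm ℂ m) p.1 p.2) f, ?_⟩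
  refine eq_of_eval_eq_of_eval_ne_zero (det_rInv_ne_zero h) fun x hx => ?_
  set Y : Matrix (Fin n) (Fin m) ℂ := of fun s i => x (s, i)
  have hxY : x = fun p => Y p.1 p.2 := rfl
  rw [hxY, ← aeval_eq_eval, aeval_det_rInv] at hx
  have hS : (Yᵀ * Y)ᵀ = Yᵀ * Y := by rw [transpose_mul, transpose_transpose]
  obtain ⟨g, hg, hgY⟩ := exists_orthogonal_mul_eq (gramRoot_transpose_mul_self h hS) hx
  rw [hxY, ← aeval_eq_eval, ← AlgHom.comp_apply, aeval_comp_aeval_rInv, ← AlgHom.comp_apply,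
    aeval_comp_aeval_gramRoot h hS, aeval_eq_eval, ← hgY]
  exact hf g hg Y

end Invariants

/-- **First fundamental theorem of invariant theory for `O_n`** (in the range `n ≥ 2m`):
the algebra map from the polynomial ring on `m(m+1)/2` indeterminates sending the
generators to the quadratic invariants `r_{ij}`, `i ≤ j`, is injective with image
exactly the `O_n`-invariant polynomials on `M_{n,m}(ℂ)`. -/
theorem stmt_6 (n m : ℕ) (hnm : n ≥ 2 * m) :
    Function.Injective
        (MvPolynomial.aeval (R := ℂ)
          (fun p : {p : Fin m × Fin m // p.1 ≤ p.2} => rInv n m p.1.1 p.1.2)) ∧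
      ∀ f : MvPolynomial (Fin n × Fin m) ℂ,
        (f ∈ (MvPolynomial.aeval (R := ℂ)
            (fun p : {p : Fin m × Fin m // p.1 ≤ p.2} =>
              rInv n m p.1.1 p.1.2)).range ↔ IsOnInvariant n m f) := by
  refine ⟨(leftInverse_aeval_rInv hnm).injective,
    fun f => ⟨?_, mem_range_aeval_rInv_of_isOnInvariant hnm⟩⟩
  rintro ⟨P, rfl⟩
  exact isOnInvariant_aeval_rInv P
end
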